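/- arXiv:2202.00600 — 2 statements merged into one kernel-verified Lean document; each statement's English description precedes it below -/
import Mathlib

section
/- Let ψ₀ be a SIC fiducial vector in odd dimension d, and let x_0, …, x_{(d−1)/2} ∈ ℂ^{ℤ/dℤ} be defined by (x_0)_i = √((d+1)/2)·ψ₀(i)² and, for r ≠ 0, (x_r)_i = √(d+1)·ψ₀(i − 2^{−1}r)·ψ₀(i + 2^{−1}r). Then Σ_{r=0}^{(d−1)/2} |x_r⟩⟨x_r| = (1/2)(1_d + P_θ), where P_θ = (1/d)·Σ_{p ∈ (ℤ/dℤ)²} e^{2iθ_{Hp}}·D_{−p} is the generalised parity operator, and moreover P_θ² = 1_d. -/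
open Matrix Complex

/-- `τ = -exp(iπ/d)`. -/
noncomputable def tau (d : ℕ) : ℂ := -Complex.exp (Real.pi * Complex.I / d)

/-- The displacement operator `D_p = D_{i,j}`, with `(r,s)` entry
`τ^{ij+2js} δ_{r,s+i}` (exponents of the `d`-th root of unity `τ` taken mod `d`). -/
noncomputable def Disp (d : ℕ) [NeZero d] (p : ZMod d × ZMod d) :
    Matrix (ZMod d) (ZMod d) ℂ :=
  Matrix.of fun r s =>
    tau d ^ ((p.1 * p.2 + 2 * p.2 * s).val) * (if r = s + p.1 then 1 else 0)

/-- The standard Hermitian inner product `⟨x, y⟩`, antilinear in the first slot. -/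
noncomputable def cInner {n : Type*} [Fintype n] (x y : n → ℂ) : ℂ :=
  ∑ k, star (x k) * y k

/-- Rank-one projector `|x⟩⟨x|` as a matrix. -/
noncomputable def outer {n : Type*} [Fintype n] (x : n → ℂ) : Matrix n n ℂ :=
  Matrix.of fun i j => x i * star (x j)

/-- `Hp = (i, 2⁻¹j)` for `p = (i,j)`. -/
def Hmap (d : ℕ) [NeZero d] (p : ZMod d × ZMod d) : ZMod d × ZMod d :=
  (p.1, (2 : ZMod d)⁻¹ * p.2)

/-- The squared SIC overlap phase `e^{2iθ_q}`:
`(d+1)·⟨ψ₀, D_q ψ₀⟩²` for `q ≠ 0`, and `1` for `q = 0`. -/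
noncomputable def sqPhase (d : ℕ) [NeZero d] (ψ₀ : ZMod d → ℂ)
    (q : ZMod d × ZMod d) : ℂ :=
  if q = 0 then 1 else ((d : ℂ) + 1) * (cInner ψ₀ ((Disp d q).mulVec ψ₀)) ^ 2

/-- The generalised parity operator `P_θ = (1/d)·Σ_p e^{2iθ_{Hp}} D_{-p}`. -/
noncomputable def genParity (d : ℕ) [NeZero d] (ψ₀ : ZMod d → ℂ) :
    Matrix (ZMod d) (ZMod d) ℂ :=
  ((d : ℂ)⁻¹) • ∑ p : ZMod d × ZMod d, sqPhase d ψ₀ (Hmap d p) • Disp d (-p)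

/-- The components of `√((d+1)/2)·ψ₀ ⊗ ψ₀` in the symmetric blocks of the
doubled Weyl representation. -/
noncomputable def sicX (d : ℕ) [NeZero d] (ψ₀ : ZMod d → ℂ) (r : ℕ) :
    ZMod d → ℂ :=
  if r = 0 then
    fun i => (Real.sqrt (((d : ℝ) + 1) / 2) : ℂ) * ψ₀ i ^ 2
  else
    fun i => (Real.sqrt ((d : ℝ) + 1) : ℂ) *
      ψ₀ (i - (2 : ZMod d)⁻¹ * (r : ZMod d)) * ψ₀ (i + (2 : ZMod d)⁻¹ * (r : ZMod d))

/-!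
Write `v_u(i) = ψ₀(i - u) ψ₀(i + u)` and `Q = ∑_u |v_u⟩⟨v_u|`. Then `x_0 = √((d+1)/2) v_0` and
`x_r = √(d+1) v_{r/2}`, so, as `v_{-u} = v_u`, the projectors onto the `x_r` sum to `((d+1)/2) Q`.
The overlaps `⟨ψ₀, D_{m, n/2} ψ₀⟩` are the character transform in `n` of the ambiguity kernel
`s ↦ conj ψ₀(s + m/2) ψ₀(s - m/2)`. The convolution theorem for this transform turns the definition
of `P_θ` into `P_θ = (d+1) Q - 1`, while its autocorrelation form together with the SIC condition
gives `⟨v_s, v_t⟩ = (δ_{s,t} + δ_{s,-t}) / (d+1)`, hence `Q² = 2Q / (d+1)`. So `E = ((d+1)/2) Q`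
is idempotent, the sum of projectors is `E = (1 + P_θ)/2`, and `P_θ = 2E - 1` squares to `1`.
-/

open Finset

section CharTransform

variable {R : Type*} [CommRing R] [Fintype R] {χ : AddChar R ℂ}

def charTransform (χ : AddChar R ℂ) (f : R → ℂ) (n : R) : ℂ :=
  ∑ x, f x * χ (n * x)

theorem sum_charTransform_mul_charTransform [DecidableEq R] (hχ : χ.IsPrimitive)
    (f h : R → ℂ) (c : R) :
    ∑ n, charTransform χ f n * charTransform χ h n * χ (-(n * c)) =
      Fintype.card R * ∑ x, f x * h (c - x) := by
  have hexpand : ∀ n, charTransform χ f n * charTransform χ h n * χ (-(n * c)) =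
      ∑ x, ∑ y, f x * h y * χ (n * (x + y - c)) := by
    intro n
    rw [charTransform, charTransform, sum_mul_sum, sum_mul]
    refine sum_congr rfl fun x _ => ?_
    rw [sum_mul]
    refine sum_congr rfl fun y _ => ?_
    rw [mul_sub, mul_add, sub_eq_add_neg, AddChar.map_add_eq_mul, AddChar.map_add_eq_mul]
    ring
  simp_rw [hexpand]
  rw [sum_comm, mul_sum]
  refine sum_congr rfl fun x _ => ?_
  rw [sum_comm]
  simp_rw [← mul_sum, AddChar.sum_mulShift _ hχ]
  rw [sum_eq_single (c - x) (fun y _ hy => by rw [if_neg fun h => hy (by linear_combination h),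
    Nat.cast_zero, mul_zero]) (by simp), if_pos (by ring)]
  ring

theorem star_charTransform (f : R → ℂ) (n : R) :
    star (charTransform χ f n) = charTransform χ (fun y => star (f (-y))) n := by
  simp only [charTransform, star_sum, star_mul', Complex.star_def, ← AddChar.map_neg_eq_conj]
  exact Fintype.sum_equiv (Equiv.neg R) _ _ fun x => by simp

theorem sum_charTransform_mul_star [DecidableEq R] (hχ : χ.IsPrimitive) (f : R → ℂ) (k : R) :
    ∑ n, charTransform χ f n * star (charTransform χ f n) * χ (n * k) =
      Fintype.card R * ∑ x, f x * star (f (x + k)) := by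
  simpa [star_charTransform] using
    sum_charTransform_mul_charTransform hχ f (fun y => star (f (-y))) (-k)

end CharTransform

section Outer

variable {n : Type*} [Fintype n]

theorem outer_mul_outer (x y : n → ℂ) : outer x * outer y = cInner x y • vecMulVec x (star y) := by
  change vecMulVec x (star x) * vecMulVec y (star y) = _
  rw [vecMulVec_mul_vecMulVec, vecMulVec_smul]
  rfl

theorem outer_ofReal_sqrt_smul {t : ℝ} (ht : 0 ≤ t) (x : n → ℂ) :
    outer (((√t : ℝ) : ℂ) • x) = (t : ℂ) • outer x := by
  have hstar : star ((√t : ℝ) : ℂ) = ((√t : ℝ) : ℂ) := Complex.conj_ofReal _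
  have hsq : ((√t : ℝ) : ℂ) * ((√t : ℝ) : ℂ) = t := by exact_mod_cast Real.mul_self_sqrt ht
  ext i j
  simp only [outer, Matrix.of_apply, Matrix.smul_apply, Pi.smul_apply, smul_eq_mul, star_mul',
    hstar]
  linear_combination x i * star (x j) * hsq

theorem sum_outer_mul_self_of_cInner {G : Type*} [AddGroup G] [Fintype G] [DecidableEq G]
    (v : G → n → ℂ) (c : ℂ) (hneg : ∀ u, v (-u) = v u)
    (hinner : ∀ s t,
      cInner (v s) (v t) = c * ((if s = t then 1 else 0) + if s = -t then 1 else 0)) :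
    (∑ u, outer (v u)) * (∑ u, outer (v u)) = (2 * c) • ∑ u, outer (v u) := by
  rw [sum_mul_sum, smul_sum]
  refine sum_congr rfl fun s _ => ?_
  have hflip : ∀ t : G, (s = -t) ↔ (-s = t) := fun _ => neg_eq_iff_eq_neg.symm
  simp only [outer_mul_outer, hinner, mul_add, add_smul, sum_add_distrib, mul_ite, mul_one,
    mul_zero, ite_smul, zero_smul, hflip, sum_ite_eq, mem_univ, if_true, hneg]
  change c • outer (v s) + c • outer (v s) = _
  module

end Outer

theorem IsIdempotentElem.two_mul_sub_one_mul_self {R : Type*} [Ring R] {e : R}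
    (he : IsIdempotentElem e) : (2 * e - 1) * (2 * e - 1) = 1 := by
  calc (2 * e - 1) * (2 * e - 1) = 4 * (e * e) - 4 * e + 1 := by noncomm_ring
    _ = 1 := by rw [he.eq, sub_self, zero_add]

theorem sum_zmod_eq_add_two_nsmul_sum_range {d : ℕ} [NeZero d] {M : Type*} [AddCommMonoid M]
    (hodd : Odd d) (F : ZMod d → M) (hF : ∀ s, F (-s) = F s) :
    ∑ s, F s = F 0 + 2 • ∑ r ∈ range ((d - 1) / 2), F ((r + 1 : ℕ) : ZMod d) := by
  obtain ⟨k, rfl⟩ := hodd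
  have hrange : ∑ s, F s = ∑ r ∈ range (2 * k + 1), F r :=
    (sum_nbij' (fun r : ℕ => (r : ZMod (2 * k + 1))) ZMod.val (fun _ _ => mem_univ _)
      (fun s _ => mem_range.mpr (ZMod.val_lt s))
      (fun r hr => ZMod.val_cast_of_lt (mem_range.mp hr)) (fun s _ => ZMod.natCast_zmod_val s)
      (fun _ _ => rfl)).symm
  have hreflect : ∑ r ∈ range k, F ((k + r + 1 : ℕ) : ZMod (2 * k + 1)) =
      ∑ r ∈ range k, F ((r + 1 : ℕ) : ZMod (2 * k + 1)) := by
    rw [← sum_range_reflect]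
    refine sum_congr rfl fun r hr => ?_
    have hr := mem_range.mp hr
    rw [← hF]
    congr 1
    rw [neg_eq_iff_add_eq_zero, ← Nat.cast_add,
      show k + (k - 1 - r) + 1 + (r + 1) = 2 * k + 1 by omega, ZMod.natCast_self]
  have hhalves : range (2 * k) = range (k + k) := by rw [two_mul]
  rw [hrange, sum_range_succ', hhalves, sum_range_add, hreflect,
    show (2 * k + 1 - 1) / 2 = k by omega, two_nsmul, Nat.cast_zero, add_comm]

section Weyl

variable {d : ℕ} [NeZero d]

theorem tau_isPrimitiveRoot (hodd : Odd d) : IsPrimitiveRoot (tau d) d := by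
  obtain ⟨k, rfl⟩ := hodd
  -- `τ = exp(2πi (k + 1) / d)` for `d = 2k + 1`
  have hcop : Nat.Coprime (k + 1) (2 * k + 1) := by
    rw [show 2 * k + 1 = (k + 1) + k by ring, Nat.coprime_self_add_right,
      Nat.coprime_self_add_left]
    exact Nat.coprime_one_left k
  convert Complex.isPrimitiveRoot_exp_of_coprime (k + 1) (2 * k + 1) (by omega) hcop using 1
  rw [tau, ← neg_one_mul, ← Complex.exp_pi_mul_I, ← Complex.exp_add]
  congr 1
  have hd : (2 * (k : ℂ) + 1) ≠ 0 := by norm_cast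
  push_cast
  field_simp
  ring

noncomputable def tauChar (hodd : Odd d) : AddChar (ZMod d) ℂ :=
  AddChar.zmodChar d (tau_isPrimitiveRoot hodd).pow_eq_one

theorem tauChar_isPrimitive (hodd : Odd d) : (tauChar hodd).IsPrimitive :=
  AddChar.zmodChar_primitive_of_primitive_root d (tau_isPrimitiveRoot hodd)

theorem tau_pow_val (hodd : Odd d) (z : ZMod d) : tau d ^ z.val = tauChar hodd z :=
  (AddChar.zmodChar_apply _ z).symm

omit [NeZero d] in
theorem two_mul_inv_two (hodd : Odd d) : (2 : ZMod d) * 2⁻¹ = 1 :=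
  ZMod.mul_inv_of_unit 2 <| by
    exact_mod_cast (ZMod.isUnit_iff_coprime 2 d).mpr (Nat.coprime_two_left.mpr hodd)

theorem disp_zero : Disp d 0 = 1 := by
  ext r s
  simp [Disp, Matrix.one_apply]

theorem disp_apply (hodd : Odd d) (p : ZMod d × ZMod d) (r s : ZMod d) :
    Disp d p r s = if r = s + p.1 then tauChar hodd (p.1 * p.2 + 2 * p.2 * s) else 0 := by
  simp [Disp, tau_pow_val hodd]

theorem disp_mulVec_apply (hodd : Odd d) (p : ZMod d × ZMod d) (ψ : ZMod d → ℂ) (r : ZMod d) :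
    (Disp d p *ᵥ ψ) r = tauChar hodd (p.1 * p.2 + 2 * p.2 * (r - p.1)) * ψ (r - p.1) := by
  have hsupp : ∀ s, (r = s + p.1) ↔ (r - p.1 = s) := fun _ => sub_eq_iff_eq_add.symm
  simp [Matrix.mulVec, dotProduct, disp_apply hodd, hsupp]

def ambiguityKernel (ψ : ZMod d → ℂ) (m s : ZMod d) : ℂ :=
  star (ψ (s + 2⁻¹ * m)) * ψ (s - 2⁻¹ * m)

theorem cInner_disp_half_mulVec (hodd : Odd d) (ψ : ZMod d → ℂ) (m n : ZMod d) :
    cInner ψ (Disp d (m, 2⁻¹ * n) *ᵥ ψ) =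
      charTransform (tauChar hodd) (ambiguityKernel ψ m) n := by
  have h2 := two_mul_inv_two hodd
  refine Fintype.sum_equiv (Equiv.addRight (-(2⁻¹ * m))) _ _ fun r => ?_
  simp only [disp_mulVec_apply hodd, ambiguityKernel, Equiv.coe_addRight]
  rw [show r + -(2⁻¹ * m) + 2⁻¹ * m = r by ring,
    show r + -(2⁻¹ * m) - 2⁻¹ * m = r - m by linear_combination (-m) * h2,
    show n * (r + -(2⁻¹ * m)) = m * (2⁻¹ * n) + 2 * (2⁻¹ * n) * (r - m) by
      linear_combination (-(n * r)) * h2]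
  ring

end Weyl

section SIC

variable {d : ℕ} [NeZero d] {ψ : ZMod d → ℂ}

def IsSICFiducial (ψ : ZMod d → ℂ) : Prop :=
  cInner ψ ψ = 1 ∧
    ∀ p : ZMod d × ZMod d, p ≠ 0 → ‖cInner ψ (Disp d p *ᵥ ψ)‖ ^ 2 = 1 / ((d : ℝ) + 1)

omit [NeZero d] in
theorem pair_half_eq_zero_iff (hodd : Odd d) {m n : ZMod d} :
    ((m, 2⁻¹ * n) : ZMod d × ZMod d) = 0 ↔ m = 0 ∧ n = 0 := by
  have h2 := two_mul_inv_two hodd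
  rw [Prod.mk_eq_zero]
  refine and_congr_right fun _ => ⟨fun h => ?_, fun h => by rw [h, mul_zero]⟩
  linear_combination 2 * h - n * h2

theorem sqPhase_eq (hunit : cInner ψ ψ = 1) (q : ZMod d × ZMod d) :
    sqPhase d ψ q =
      ((d : ℂ) + 1) * cInner ψ (Disp d q *ᵥ ψ) ^ 2 - if q = 0 then (d : ℂ) else 0 := by
  unfold sqPhase
  split_ifs with hq
  · rw [hq, disp_zero, one_mulVec, hunit]
    ring
  · ring

theorem cInner_disp_mul_star (hψ : IsSICFiducial ψ) (q : ZMod d × ZMod d) :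
    cInner ψ (Disp d q *ᵥ ψ) * star (cInner ψ (Disp d q *ᵥ ψ)) =
      ((d : ℂ) + 1)⁻¹ * (1 + if q = 0 then (d : ℂ) else 0) := by
  have hd1 : (d : ℂ) + 1 ≠ 0 := Nat.cast_add_one_ne_zero d
  split_ifs with hq
  · rw [hq, disp_zero, one_mulVec, hψ.1, star_one]
    field_simp
    ring
  · rw [Complex.star_def, Complex.mul_conj, Complex.normSq_eq_norm_sq, hψ.2 q hq]
    push_cast
    ring

theorem sum_ambiguityKernel_mul_star (hodd : Odd d) (hψ : IsSICFiducial ψ) (m k : ZMod d) :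
    ∑ x, ambiguityKernel ψ m x * star (ambiguityKernel ψ m (x + k)) =
      ((d : ℂ) + 1)⁻¹ * ((if k = 0 then 1 else 0) + if m = 0 then 1 else 0) := by
  have hd : (d : ℂ) ≠ 0 := Nat.cast_ne_zero.mpr (NeZero.ne d)
  have hparseval := sum_charTransform_mul_star (tauChar_isPrimitive hodd) (ambiguityKernel ψ m) k
  simp_rw [← cInner_disp_half_mulVec hodd, cInner_disp_mul_star hψ,
    pair_half_eq_zero_iff hodd, ZMod.card] at hparseval
  have hchar : ∑ x, ((d : ℂ) + 1)⁻¹ * (1 + if m = 0 ∧ x = 0 then (d : ℂ) else 0) *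
      tauChar hodd (x * k) =
      d * (((d : ℂ) + 1)⁻¹ * ((if k = 0 then 1 else 0) + if m = 0 then 1 else 0)) := by
    simp only [mul_add, add_mul, mul_one, sum_add_distrib, ← mul_sum,
      AddChar.sum_mulShift _ (tauChar_isPrimitive hodd), ZMod.card, ite_and]
    simp only [mul_ite, mul_zero, ite_mul, zero_mul]
    split_ifs <;> simp <;> ring
  exact mul_left_cancel₀ hd (hparseval.symm.trans hchar)

def pairVec (ψ : ZMod d → ℂ) (u : ZMod d) : ZMod d → ℂ := fun i => ψ (i - u) * ψ (i + u)

noncomputable def pairFrame (ψ : ZMod d → ℂ) : Matrix (ZMod d) (ZMod d) ℂ :=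
  ∑ u, outer (pairVec ψ u)

omit [NeZero d] in
theorem pairVec_neg (u : ZMod d) : pairVec ψ (-u) = pairVec ψ u := by
  ext i
  simp only [pairVec, sub_neg_eq_add, ← sub_eq_add_neg, mul_comm]

theorem cInner_pairVec (hodd : Odd d) (hψ : IsSICFiducial ψ) (s t : ZMod d) :
    cInner (pairVec ψ s) (pairVec ψ t) =
      ((d : ℂ) + 1)⁻¹ * ((if s = t then 1 else 0) + if s = -t then 1 else 0) := by
  have h2 := two_mul_inv_two hodd
  have hshift : cInner (pairVec ψ s) (pairVec ψ t) =
      ∑ x, ambiguityKernel ψ (t - s) x * star (ambiguityKernel ψ (t - s) (x + (s + t))) := by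
    refine (Fintype.sum_equiv (Equiv.addRight (2⁻¹ * (s + t))) _ _ fun x => ?_).symm
    simp only [ambiguityKernel, pairVec, Equiv.coe_addRight, star_mul', star_star]
    rw [show x + 2⁻¹ * (t - s) = x + 2⁻¹ * (s + t) - s by linear_combination (-s) * h2,
      show x - 2⁻¹ * (t - s) = x + 2⁻¹ * (s + t) - t by linear_combination (-t) * h2,
      show x + (s + t) + 2⁻¹ * (t - s) = x + 2⁻¹ * (s + t) + t by linear_combination (-s) * h2,
      show x + (s + t) - 2⁻¹ * (t - s) = x + 2⁻¹ * (s + t) + s by linear_combination (-t) * h2]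
    ring
  rw [hshift, sum_ambiguityKernel_mul_star hodd hψ, add_comm (if s = t then _ else _)]
  simp only [add_eq_zero_iff_eq_neg, sub_eq_zero, eq_comm (a := t)]

theorem pairFrame_mul_self (hodd : Odd d) (hψ : IsSICFiducial ψ) :
    pairFrame ψ * pairFrame ψ = (2 * ((d : ℂ) + 1)⁻¹) • pairFrame ψ :=
  sum_outer_mul_self_of_cInner _ _ pairVec_neg (cInner_pairVec hodd hψ)

theorem pairFrame_apply (hodd : Odd d) (i j : ZMod d) :
    pairFrame ψ i j =
      ∑ x, ambiguityKernel ψ (j - i) x * ambiguityKernel ψ (j - i) (i + j - x) := by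
  have h2 := two_mul_inv_two hodd
  rw [pairFrame, Matrix.sum_apply]
  refine Fintype.sum_equiv (Equiv.addRight (2⁻¹ * (i + j))) _ _ fun u => ?_
  simp only [outer, pairVec, ambiguityKernel, Matrix.of_apply, Equiv.coe_addRight, star_mul']
  rw [show u + 2⁻¹ * (i + j) + 2⁻¹ * (j - i) = j + u by linear_combination j * h2,
    show u + 2⁻¹ * (i + j) - 2⁻¹ * (j - i) = i + u by linear_combination i * h2,
    show i + j - (u + 2⁻¹ * (i + j)) + 2⁻¹ * (j - i) = j - u by linear_combination (-i) * h2,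
    show i + j - (u + 2⁻¹ * (i + j)) - 2⁻¹ * (j - i) = i - u by linear_combination (-j) * h2]
  ring

end SIC

section Parity

variable {d : ℕ} [NeZero d] {ψ : ZMod d → ℂ}

theorem genParity_apply_eq_sum (hodd : Odd d) (i j : ZMod d) :
    genParity d ψ i j =
      (d : ℂ)⁻¹ * ∑ n, sqPhase d ψ (j - i, 2⁻¹ * n) * tauChar hodd (-(n * (i + j))) := by
  have hsupp : ∀ m, (i = j + -m) ↔ (j - i = m) := fun m => by
    rw [← sub_eq_add_neg, eq_sub_iff_add_eq, ← eq_sub_iff_add_eq', eq_comm]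
  simp only [genParity, Hmap, Matrix.smul_apply, Matrix.sum_apply, smul_eq_mul, disp_apply hodd,
    Prod.fst_neg, Prod.snd_neg, mul_ite, mul_zero, hsupp]
  rw [Fintype.sum_prod_type, sum_comm]
  simp only [Fintype.sum_ite_eq]
  congr 2 with n
  ring_nf

theorem genParity_eq (hodd : Odd d) (hunit : cInner ψ ψ = 1) :
    genParity d ψ = ((d : ℂ) + 1) • pairFrame ψ - 1 := by
  have hd : (d : ℂ) ≠ 0 := Nat.cast_ne_zero.mpr (NeZero.ne d)
  ext i j
  have hconv := sum_charTransform_mul_charTransform (tauChar_isPrimitive hodd)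
    (ambiguityKernel ψ (j - i)) (ambiguityKernel ψ (j - i)) (i + j)
  have hdiag : ∑ n, (if j - i = 0 ∧ n = 0 then (d : ℂ) else 0) * tauChar hodd (-(n * (i + j))) =
      if i = j then (d : ℂ) else 0 := by
    simp [ite_and, sub_eq_zero, eq_comm]
  rw [ZMod.card] at hconv
  replace hconv := (eq_inv_mul_iff_mul_eq₀ hd).mpr hconv.symm
  rw [genParity_apply_eq_sum hodd, Matrix.sub_apply, Matrix.smul_apply, Matrix.one_apply,
    pairFrame_apply hodd, smul_eq_mul, hconv]
  simp_rw [sqPhase_eq hunit, cInner_disp_half_mulVec hodd, pair_half_eq_zero_iff hodd, sub_mul,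
    sum_sub_distrib, hdiag]
  set T := charTransform (tauChar hodd) (ambiguityKernel ψ (j - i))
  have hsq : ∑ n, ((d : ℂ) + 1) * T n ^ 2 * tauChar hodd (-(n * (i + j))) =
      ((d : ℂ) + 1) * ∑ n, T n * T n * tauChar hodd (-(n * (i + j))) := by
    rw [mul_sum]
    exact sum_congr rfl fun _ _ => by ring
  rw [hsq]
  field_simp
  split_ifs <;> ring

end Parity

section Projector

variable {d : ℕ} [NeZero d] {ψ : ZMod d → ℂ}

theorem sicX_zero : sicX d ψ 0 = ((√(((d : ℝ) + 1) / 2) : ℝ) : ℂ) • pairVec ψ 0 := by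
  ext i
  simp [sicX, pairVec, sq]

theorem sicX_succ (r : ℕ) :
    sicX d ψ (r + 1) = ((√((d : ℝ) + 1) : ℝ) : ℂ) • pairVec ψ (2⁻¹ * ((r + 1 : ℕ) : ZMod d)) := by
  ext i
  simp only [sicX, pairVec, Nat.add_one_ne_zero, if_false, Pi.smul_apply, smul_eq_mul]
  ring

theorem pairFrame_eq_sum_half (hodd : Odd d) :
    pairFrame ψ = ∑ s, outer (pairVec ψ (2⁻¹ * s)) := by
  have h2 := two_mul_inv_two hodd
  have hcancel : ∀ s : ZMod d, 2⁻¹ * (2 * s) = s := fun s => by linear_combination s * h2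
  exact Fintype.sum_equiv ⟨(2 * ·), (2⁻¹ * ·), hcancel, fun s => by linear_combination s * h2⟩
    _ _ fun s => by simp only [Equiv.coe_fn_mk, hcancel]

theorem sum_outer_sicX (hodd : Odd d) :
    ∑ r ∈ range ((d - 1) / 2 + 1), outer (sicX d ψ r) = (((d : ℂ) + 1) / 2) • pairFrame ψ := by
  have hF : ∀ s : ZMod d, outer (pairVec ψ (2⁻¹ * -s)) = outer (pairVec ψ (2⁻¹ * s)) := by
    simp [mul_neg, pairVec_neg]
  rw [pairFrame_eq_sum_half hodd, sum_zmod_eq_add_two_nsmul_sum_range hodd _ hF, sum_range_succ',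
    sicX_zero]
  simp only [sicX_succ, outer_ofReal_sqrt_smul (by positivity : (0 : ℝ) ≤ (d : ℝ) + 1),
    outer_ofReal_sqrt_smul (by positivity : (0 : ℝ) ≤ ((d : ℝ) + 1) / 2), ← smul_sum, mul_zero]
  push_cast
  module

theorem isIdempotentElem_sum_outer_sicX (hodd : Odd d) (hψ : IsSICFiducial ψ) :
    IsIdempotentElem (∑ r ∈ range ((d - 1) / 2 + 1), outer (sicX d ψ r)) := by
  have hd1 : (d : ℂ) + 1 ≠ 0 := Nat.cast_add_one_ne_zero d
  rw [sum_outer_sicX hodd, IsIdempotentElem, smul_mul_smul_comm, pairFrame_mul_self hodd hψ,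
    smul_smul]
  congr 1
  field_simp

theorem genParity_eq_two_mul_sum_outer_sicX_sub_one (hodd : Odd d) (hunit : cInner ψ ψ = 1) :
    genParity d ψ = 2 * ∑ r ∈ range ((d - 1) / 2 + 1), outer (sicX d ψ r) - 1 := by
  rw [genParity_eq hodd hunit, sum_outer_sicX hodd, two_mul, ← add_smul, add_halves]

end Projector

theorem sum_sicX_projectors_eq_genParity_general
    (d : ℕ) [NeZero d] (hodd : Odd d)
    (ψ₀ : ZMod d → ℂ)
    (hunit : cInner ψ₀ ψ₀ = 1)
    (hsic : ∀ p : ZMod d × ZMod d, p ≠ 0 →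
      ‖cInner ψ₀ ((Disp d p).mulVec ψ₀)‖ ^ 2 = 1 / (d + 1)) :
    (∑ r ∈ Finset.range ((d - 1) / 2 + 1), outer (sicX d ψ₀ r)
      = (1 / 2 : ℂ) • ((1 : Matrix (ZMod d) (ZMod d) ℂ) + genParity d ψ₀)) ∧
    genParity d ψ₀ * genParity d ψ₀ = 1 := by
  rw [genParity_eq_two_mul_sum_outer_sicX_sub_one hodd hunit]
  refine ⟨?_, (isIdempotentElem_sum_outer_sicX hodd ⟨hunit, hsic⟩).two_mul_sub_one_mul_self⟩
  rw [add_sub_cancel, two_mul, ← two_smul ℂ, smul_smul]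
  norm_num

/-- For a SIC fiducial `ψ₀` in odd dimension `d`, the sum of the rank-one
projectors onto the vectors `x_r` equals `(1/2)(1 + P_θ)`, and `P_θ² = 1`. -/
theorem sum_sicX_projectors_eq_genParity
    (d : ℕ) [NeZero d] (hodd : Odd d) (hd : 3 ≤ d)
    (ψ₀ : ZMod d → ℂ)
    (hunit : cInner ψ₀ ψ₀ = 1)
    (hsic : ∀ p : ZMod d × ZMod d, p ≠ 0 →
      ‖cInner ψ₀ ((Disp d p).mulVec ψ₀)‖ ^ 2 = 1 / (d + 1)) :
    (∑ r ∈ Finset.range ((d - 1) / 2 + 1), outer (sicX d ψ₀ r)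
      = (1 / 2 : ℂ) • ((1 : Matrix (ZMod d) (ZMod d) ℂ) + genParity d ψ₀)) ∧
    genParity d ψ₀ * genParity d ψ₀ = 1 :=
  sum_sicX_projectors_eq_genParity_general d hodd ψ₀ hunit hsic
end

section
/- Let ψ₀ be a SIC fiducial vector in odd dimension d with generalised parity operator P_θ, let F be a 2×2 matrix over ℤ/dℤ, and set F' = H^{−1}FH where H = [[1,0],[0,2^{−1}]]. Suppose U is a unitary on ℂ^{ℤ/dℤ} satisfying U D_p U† = D_{Fp} for all p ∈ (ℤ/dℤ)² and U ψ₀ = c·ψ₀ for some scalar c ∈ ℂ, and suppose V is a unitary satisfying V D_p V† = D_{F'p} for all p. Then V commutes with the generalised parity operator: V P_θ = P_θ V. -/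
open Matrix Complex

/-- The action of a 2×2 matrix over `ℤ/dℤ` on a label vector `p ∈ (ℤ/dℤ)²`. -/
def matAct (d : ℕ) [NeZero d] (F : Matrix (Fin 2) (Fin 2) (ZMod d))
    (p : ZMod d × ZMod d) : ZMod d × ZMod d :=
  (F 0 0 * p.1 + F 0 1 * p.2, F 1 0 * p.1 + F 1 1 * p.2)

/-- The matrix `H = [[1,0],[0,2⁻¹]]` over `ℤ/dℤ`. -/
def Hmat (d : ℕ) [NeZero d] : Matrix (Fin 2) (Fin 2) (ZMod d) :=
  !![1, 0; 0, (2 : ZMod d)⁻¹]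

/-!
Conjugation by `V` sends `D_{-p}` to `D_{-F'p}`, so `V P_θ V†` is the sum defining `P_θ` with
`D_{-F'p}` carrying the coefficient `e^{2iθ_{Hp}}`. Since `H F' = F H`, this is `e^{2iθ_{F(Hp)}}`,
and `e^{2iθ_{Fq}} = e^{2iθ_q}` because `U` fixes `ψ₀` up to a unimodular phase, so
`⟨ψ₀, D_{Fq} ψ₀⟩ = ⟨ψ₀, U D_q U† ψ₀⟩ = ⟨ψ₀, D_q ψ₀⟩`. Reindexing the sum by the bijection `F'`
gives `V P_θ V† = P_θ`. Injectivity of `F` and `F'` comes from injectivity of `p ↦ D_p`, which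
holds because `τ` is a primitive `d`-th root of unity and `2` is invertible mod `d`.
-/

theorem isPrimitiveRoot_tau {d : ℕ} (hodd : Odd d) : IsPrimitiveRoot (tau d) d := by
  obtain ⟨m, rfl⟩ := hodd
  have hcop : (m + 1).Coprime (2 * m + 1) := by
    rw [show 2 * m + 1 = m + (m + 1) by ring, Nat.coprime_add_self_right]
    exact Nat.coprime_self_add_left.mpr (Nat.coprime_one_left m)
  -- `-exp(πi/d) = exp(2πi (m+1)/d)` for `d = 2m+1`
  convert Complex.isPrimitiveRoot_exp_of_coprime (m + 1) (2 * m + 1) (by omega) hcop using 1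
  have hd : (2 * m + 1 : ℂ) ≠ 0 := by norm_cast
  rw [tau, ← neg_one_mul, ← Complex.exp_pi_mul_I, ← Complex.exp_add]
  congr 1
  push_cast
  field_simp
  ring

theorem ZMod.isUnit_two_of_odd {d : ℕ} (hodd : Odd d) : IsUnit (2 : ZMod d) := by
  exact_mod_cast (ZMod.isUnit_iff_coprime 2 d).mpr (Nat.coprime_two_left.mpr hodd)

section Displacement

variable {d : ℕ} [NeZero d]

theorem Disp_apply_add_fst (p : ZMod d × ZMod d) (s : ZMod d) :
    Disp d p (s + p.1) s = tau d ^ (p.1 * p.2 + 2 * p.2 * s).val := by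
  simp [Disp]

theorem Disp_apply_of_ne {p : ZMod d × ZMod d} {r s : ZMod d} (h : r ≠ s + p.1) :
    Disp d p r s = 0 := by
  simp [Disp, h]

theorem Disp_injective (hodd : Odd d) : Function.Injective (Disp d) := by
  have hτ := isPrimitiveRoot_tau hodd
  have hexp_inj : ∀ a b : ZMod d, tau d ^ a.val = tau d ^ b.val → a = b := fun a b hab =>
    ZMod.val_injective d (hτ.pow_inj (ZMod.val_lt a) (ZMod.val_lt b) hab)
  intro p q h
  have hfst : p.1 = q.1 := by
    by_contra hne
    have e := congrFun (congrFun h (0 + p.1)) 0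
    rw [Disp_apply_add_fst, Disp_apply_of_ne (by simpa using hne)] at e
    exact pow_ne_zero _ (hτ.ne_zero (NeZero.ne d)) e
  have hexp : ∀ s : ZMod d, p.1 * p.2 + 2 * p.2 * s = p.1 * q.2 + 2 * q.2 * s := fun s => by
    have e := congrFun (congrFun h (s + p.1)) s
    rw [Disp_apply_add_fst, hfst, Disp_apply_add_fst] at e
    rw [hfst]
    exact hexp_inj _ _ e
  have htwo : 2 * p.2 = 2 * q.2 := by linear_combination hexp 1 - hexp 0
  exact Prod.ext hfst ((ZMod.isUnit_two_of_odd hodd).mul_left_cancel htwo)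

theorem matAct_zero (F : Matrix (Fin 2) (Fin 2) (ZMod d)) : matAct d F 0 = 0 := by
  simp [matAct]

theorem matAct_neg (F : Matrix (Fin 2) (Fin 2) (ZMod d)) (p : ZMod d × ZMod d) :
    matAct d F (-p) = -matAct d F p := by
  simp only [matAct, Prod.fst_neg, Prod.snd_neg, Prod.neg_mk, Prod.mk.injEq]
  constructor <;> ring

theorem matAct_mul (A B : Matrix (Fin 2) (Fin 2) (ZMod d)) (p : ZMod d × ZMod d) :
    matAct d (A * B) p = matAct d A (matAct d B p) := by
  simp only [matAct, Matrix.mul_apply, Fin.sum_univ_two, Prod.mk.injEq]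
  constructor <;> ring

theorem Hmap_eq_matAct (p : ZMod d × ZMod d) : Hmap d p = matAct d (Hmat d) p := by
  simp [Hmap, Hmat, matAct]

theorem Hmat_mul_inv (hodd : Odd d) : Hmat d * (Hmat d)⁻¹ = 1 := by
  have h2 := ZMod.isUnit_two_of_odd hodd
  refine Matrix.mul_nonsing_inv _ ?_
  have hdet : (Hmat d).det = (2 : ZMod d)⁻¹ := by simp [Hmat, Matrix.det_fin_two_of]
  rw [hdet]
  exact IsUnit.of_mul_eq_one 2 (ZMod.inv_mul_of_unit 2 h2)

theorem Hmap_matAct_conj (hodd : Odd d) (F : Matrix (Fin 2) (Fin 2) (ZMod d))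
    (p : ZMod d × ZMod d) :
    Hmap d (matAct d ((Hmat d)⁻¹ * F * Hmat d) p) = matAct d F (Hmap d p) := by
  rw [Hmap_eq_matAct, Hmap_eq_matAct, ← matAct_mul, ← matAct_mul, ← Matrix.mul_assoc,
    ← Matrix.mul_assoc, Hmat_mul_inv hodd, Matrix.one_mul]

end Displacement

section InnerProduct

variable {n : Type*} [Fintype n]

theorem cInner_eq_star_dotProduct (x y : n → ℂ) : cInner x y = star x ⬝ᵥ y := rfl

theorem cInner_smul_left (a : ℂ) (x y : n → ℂ) : cInner (a • x) y = star a * cInner x y := by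
  simp only [cInner_eq_star_dotProduct, star_smul, smul_dotProduct, smul_eq_mul]

theorem cInner_smul_right (a : ℂ) (x y : n → ℂ) : cInner x (a • y) = a * cInner x y := by
  simp only [cInner_eq_star_dotProduct, dotProduct_smul, smul_eq_mul]

theorem cInner_mulVec (M : Matrix n n ℂ) (x y : n → ℂ) :
    cInner x (M *ᵥ y) = cInner (Mᴴ *ᵥ x) y := by
  rw [cInner_eq_star_dotProduct, cInner_eq_star_dotProduct, dotProduct_mulVec, star_mulVec,
    conjTranspose_conjTranspose]

end InnerProduct

section Unitary

variable {n : Type*} [Fintype n] [DecidableEq n]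

theorem conjTranspose_mul_self_of_mem_unitaryGroup {U : Matrix n n ℂ}
    (hU : U ∈ unitaryGroup n ℂ) : Uᴴ * U = 1 :=
  mem_unitaryGroup_iff'.mp hU

theorem conj_injective_of_mem_unitaryGroup {U : Matrix n n ℂ} (hU : U ∈ unitaryGroup n ℂ) :
    Function.Injective fun A : Matrix n n ℂ => U * A * Uᴴ := by
  have hU1 := conjTranspose_mul_self_of_mem_unitaryGroup hU
  have hcancel : ∀ A : Matrix n n ℂ, Uᴴ * (U * A * Uᴴ) * U = A := fun A => by
    rw [show Uᴴ * (U * A * Uᴴ) * U = (Uᴴ * U) * A * (Uᴴ * U) by simp only [Matrix.mul_assoc],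
      hU1, Matrix.one_mul, Matrix.mul_one]
  intro A B h
  rw [← hcancel A, ← hcancel B]
  exact congrArg (fun M => Uᴴ * M * U) h

theorem star_mul_self_of_mulVec_eq_smul {U : Matrix n n ℂ} (hU : U ∈ unitaryGroup n ℂ)
    {ψ : n → ℂ} (hψ : cInner ψ ψ ≠ 0) {c : ℂ} (hUψ : U *ᵥ ψ = c • ψ) : star c * c = 1 := by
  have h := cInner_mulVec U (U *ᵥ ψ) ψ
  rw [mulVec_mulVec, conjTranspose_mul_self_of_mem_unitaryGroup hU, one_mulVec, hUψ,
    cInner_smul_left, cInner_smul_right, ← mul_assoc] at h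
  exact (mul_eq_right₀ hψ).mp h

theorem conjTranspose_mulVec_of_mulVec_eq_smul {U : Matrix n n ℂ} (hU : U ∈ unitaryGroup n ℂ)
    {ψ : n → ℂ} (hψ : cInner ψ ψ ≠ 0) {c : ℂ} (hUψ : U *ᵥ ψ = c • ψ) :
    Uᴴ *ᵥ ψ = star c • ψ := by
  have hψ_eq : ψ = c • Uᴴ *ᵥ ψ := by
    rw [← mulVec_smul, ← hUψ, mulVec_mulVec, conjTranspose_mul_self_of_mem_unitaryGroup hU,
      one_mulVec]
  conv_rhs => rw [hψ_eq, smul_smul, star_mul_self_of_mulVec_eq_smul hU hψ hUψ, one_smul]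

theorem cInner_conj_mulVec_of_mulVec_eq_smul {U : Matrix n n ℂ} (hU : U ∈ unitaryGroup n ℂ)
    {ψ : n → ℂ} (hψ : cInner ψ ψ ≠ 0) {c : ℂ} (hUψ : U *ᵥ ψ = c • ψ) (A : Matrix n n ℂ) :
    cInner ψ ((U * A * Uᴴ) *ᵥ ψ) = cInner ψ (A *ᵥ ψ) := by
  rw [Matrix.mul_assoc, ← mulVec_mulVec, ← mulVec_mulVec, cInner_mulVec,
    conjTranspose_mulVec_of_mulVec_eq_smul hU hψ hUψ, mulVec_smul, cInner_smul_left,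
    cInner_smul_right, star_star, ← mul_assoc, mul_comm c,
    star_mul_self_of_mulVec_eq_smul hU hψ hUψ, one_mul]

theorem commute_of_conj_eq {V A : Matrix n n ℂ} (hV : V ∈ unitaryGroup n ℂ)
    (h : V * A * Vᴴ = A) : Commute V A := by
  calc V * A = V * A * (Vᴴ * V) := by
        rw [conjTranspose_mul_self_of_mem_unitaryGroup hV, Matrix.mul_one]
    _ = A * V := by rw [← Matrix.mul_assoc, h]

end Unitary

section Parity

variable {d : ℕ} [NeZero d]

theorem matAct_injective_of_conj (hodd : Odd d) {G : Matrix (Fin 2) (Fin 2) (ZMod d)}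
    {W : Matrix (ZMod d) (ZMod d) ℂ} (hW : W ∈ unitaryGroup (ZMod d) ℂ)
    (hWD : ∀ p, W * Disp d p * Wᴴ = Disp d (matAct d G p)) :
    Function.Injective (matAct d G) := fun p q hpq =>
  Disp_injective hodd <| conj_injective_of_mem_unitaryGroup hW <| by
    simp only [hWD, hpq]

theorem sqPhase_matAct {ψ₀ : ZMod d → ℂ} {F : Matrix (Fin 2) (Fin 2) (ZMod d)}
    (hinj : Function.Injective (matAct d F))
    (hoverlap : ∀ q, cInner ψ₀ (Disp d (matAct d F q) *ᵥ ψ₀) = cInner ψ₀ (Disp d q *ᵥ ψ₀))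
    (q : ZMod d × ZMod d) : sqPhase d ψ₀ (matAct d F q) = sqPhase d ψ₀ q := by
  have hzero : matAct d F q = 0 ↔ q = 0 := hinj.eq_iff' (matAct_zero F)
  simp only [sqPhase, hzero, hoverlap]

theorem conj_genParity {ψ₀ : ZMod d → ℂ} {V : Matrix (ZMod d) (ZMod d) ℂ}
    {g : ZMod d × ZMod d → ZMod d × ZMod d} (hg : Function.Bijective g)
    (hVD : ∀ p, V * Disp d p * Vᴴ = Disp d (g p)) (hneg : ∀ p, g (-p) = -g p)
    (hphase : ∀ p, sqPhase d ψ₀ (Hmap d (g p)) = sqPhase d ψ₀ (Hmap d p)) :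
    V * genParity d ψ₀ * Vᴴ = genParity d ψ₀ := by
  rw [genParity, Matrix.mul_smul, Matrix.smul_mul, Finset.mul_sum, Finset.sum_mul,
    ← hg.sum_comp fun q => sqPhase d ψ₀ (Hmap d q) • Disp d (-q)]
  congr 1
  refine Finset.sum_congr rfl fun p _ => ?_
  rw [Matrix.mul_smul, Matrix.smul_mul, hVD, hneg, hphase]

end Parity

theorem symmetry_commutes_with_genParity_general
    (d : ℕ) [NeZero d] (hodd : Odd d)
    (ψ₀ : ZMod d → ℂ)
    (hunit : cInner ψ₀ ψ₀ = 1)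
    (F : Matrix (Fin 2) (Fin 2) (ZMod d))
    (U : Matrix (ZMod d) (ZMod d) ℂ) (hU : U ∈ Matrix.unitaryGroup (ZMod d) ℂ)
    (hUD : ∀ p : ZMod d × ZMod d, U * Disp d p * Uᴴ = Disp d (matAct d F p))
    (c : ℂ) (hUψ : U.mulVec ψ₀ = c • ψ₀)
    (V : Matrix (ZMod d) (ZMod d) ℂ) (hV : V ∈ Matrix.unitaryGroup (ZMod d) ℂ)
    (hVD : ∀ p : ZMod d × ZMod d,
      V * Disp d p * Vᴴ = Disp d (matAct d ((Hmat d)⁻¹ * F * Hmat d) p)) :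
    V * genParity d ψ₀ = genParity d ψ₀ * V := by
  have hF'_bij : Function.Bijective (matAct d ((Hmat d)⁻¹ * F * Hmat d)) :=
    Finite.injective_iff_bijective.mp (matAct_injective_of_conj hodd hV hVD)
  have hphaseF : ∀ q, sqPhase d ψ₀ (matAct d F q) = sqPhase d ψ₀ q :=
    sqPhase_matAct (matAct_injective_of_conj hodd hU hUD) fun q => by
      rw [← hUD q]
      exact cInner_conj_mulVec_of_mulVec_eq_smul hU (hunit ▸ one_ne_zero) hUψ _
  refine (commute_of_conj_eq hV (conj_genParity hF'_bij hVD (matAct_neg _) fun p => ?_)).eq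
  rw [Hmap_matAct_conj hodd, hphaseF]

/-- If a symplectic unitary `U` implementing `F` fixes the SIC fiducial `ψ₀`
up to a phase, then any unitary `V` implementing `F' = H⁻¹FH` commutes with
the generalised parity operator `P_θ`. -/
theorem symmetry_commutes_with_genParity
    (d : ℕ) [NeZero d] (hodd : Odd d) (hd : 3 ≤ d)
    (ψ₀ : ZMod d → ℂ)
    (hunit : cInner ψ₀ ψ₀ = 1)
    (hsic : ∀ p : ZMod d × ZMod d, p ≠ 0 →
      ‖cInner ψ₀ ((Disp d p).mulVec ψ₀)‖ ^ 2 = 1 / (d + 1))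
    (F : Matrix (Fin 2) (Fin 2) (ZMod d))
    (U : Matrix (ZMod d) (ZMod d) ℂ) (hU : U ∈ Matrix.unitaryGroup (ZMod d) ℂ)
    (hUD : ∀ p : ZMod d × ZMod d, U * Disp d p * Uᴴ = Disp d (matAct d F p))
    (c : ℂ) (hUψ : U.mulVec ψ₀ = c • ψ₀)
    (V : Matrix (ZMod d) (ZMod d) ℂ) (hV : V ∈ Matrix.unitaryGroup (ZMod d) ℂ)
    (hVD : ∀ p : ZMod d × ZMod d,
      V * Disp d p * Vᴴ = Disp d (matAct d ((Hmat d)⁻¹ * F * Hmat d) p)) :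
    V * genParity d ψ₀ = genParity d ψ₀ * V :=
  symmetry_commutes_with_genParity_general d hodd ψ₀ hunit F U hU hUD c hUψ V hV hVD
end
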